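/- (Multi-marginal limit characterizes linear GW.) For ε > 0 define the cost c_ε((s,x,y),(s',x',y')) = ε(d_X(x,x') − d_Y(y,y'))² + (d_S(s,s') − d_X(x,x'))² + (d_S(s,s') − d_Y(y,y'))², and let π_ε ∈ Π(σ,μ,ν) minimize the quadratic functional π ↦ ∬ c_ε dπ dπ. Then every weak accumulation point π̄ of (π_ε)_{ε>0} as ε → 0 satisfies: (a) the (S,X)-marginal of π̄ is an optimal GW plan between S and X, (b) the (S,Y)-marginal of π̄ is an optimal GW plan between S and Y, and (c) ∬ |d_X(x,x') − d_Y(y,y')|² dπ̄ dπ̄ = LGW_S(X,Y). -/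

import Mathlib

/-!
Split `mgwEps ε π = ε * lgwCost π + marginalGWCost π`, the last term being the sum of the GW
costs of the `(S,X)`- and `(S,Y)`-marginals of `π`. Comparing the minimizer `π_ε` with any
competitor and letting `ε → 0` shows, by weak continuity of these quadratic functionals, that the
limit `πbar` minimizes `marginalGWCost` over `Π(σ, μ, ν)`. Since two plans with the same
`S`-marginal glue into a three-plan, this minimum is `GW²(σ, μ) + GW²(σ, ν)`, so both marginals of
`πbar` are optimal. A competitor `π'` with optimal marginals has `marginalGWCost π' ≤
marginalGWCost π_ε`, hence `lgwCost π_ε ≤ lgwCost π'`, and this inequality passes to the limit.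
-/

open MeasureTheory Filter Topology

/-- The Gromov–Wasserstein cost of a plan `π` on `X × Y`. -/
noncomputable def gwCost {X Y : Type*} [PseudoMetricSpace X] [PseudoMetricSpace Y]
    [MeasurableSpace X] [MeasurableSpace Y] (π : Measure (X × Y)) : ℝ :=
  ∫ p, ∫ q, (dist p.1 q.1 - dist p.2 q.2) ^ 2 ∂π ∂π

/-- `π` is a coupling of `μ` and `ν`. -/
def IsCoupling {X Y : Type*} [MeasurableSpace X] [MeasurableSpace Y]
    (π : Measure (X × Y)) (μ : Measure X) (ν : Measure Y) : Prop :=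
  π.map Prod.fst = μ ∧ π.map Prod.snd = ν

/-- The squared Gromov–Wasserstein distance. -/
noncomputable def gwSq {X Y : Type*} [PseudoMetricSpace X] [PseudoMetricSpace Y]
    [MeasurableSpace X] [MeasurableSpace Y] (μ : Measure X) (ν : Measure Y) : ℝ :=
  sInf {c | ∃ π : Measure (X × Y), IsCoupling π μ ν ∧ c = gwCost π}

/-- `π` is an optimal Gromov–Wasserstein plan between `μ` and `ν`. -/
def IsOptGW {X Y : Type*} [PseudoMetricSpace X] [PseudoMetricSpace Y]
    [MeasurableSpace X] [MeasurableSpace Y]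
    (π : Measure (X × Y)) (μ : Measure X) (ν : Measure Y) : Prop :=
  IsCoupling π μ ν ∧ gwCost π = gwSq μ ν

/-- The LGW objective of a three-plan on `S × X × Y`:
`∬ |d_X(x,x') − d_Y(y,y')|² dπ dπ`. -/
noncomputable def lgwCost {S X Y : Type*} [PseudoMetricSpace X] [PseudoMetricSpace Y]
    [MeasurableSpace S] [MeasurableSpace X] [MeasurableSpace Y]
    (π : Measure (S × X × Y)) : ℝ :=
  ∫ p, ∫ q, (dist p.2.1 q.2.1 - dist p.2.2 q.2.2) ^ 2 ∂π ∂π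

/-- The linear Gromov–Wasserstein value with reference `(S, σ)`:
infimum of the LGW objective over three-plans whose `(S,X)`- and `(S,Y)`-marginals
are optimal GW plans. -/
noncomputable def lgw {S X Y : Type*} [PseudoMetricSpace S] [PseudoMetricSpace X]
    [PseudoMetricSpace Y] [MeasurableSpace S] [MeasurableSpace X] [MeasurableSpace Y]
    (σ : Measure S) (μ : Measure X) (ν : Measure Y) : ℝ :=
  sInf {c | ∃ π : Measure (S × X × Y),
    IsOptGW (π.map (fun p => (p.1, p.2.1))) σ μ ∧
    IsOptGW (π.map (fun p => (p.1, p.2.2))) σ ν ∧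
    c = lgwCost π}

/-- The cost `c_ε` on `(S × X × Y)²`. -/
noncomputable def cEps {S X Y : Type*} [PseudoMetricSpace S] [PseudoMetricSpace X]
    [PseudoMetricSpace Y] (ε : ℝ) (p q : S × X × Y) : ℝ :=
  ε * (dist p.2.1 q.2.1 - dist p.2.2 q.2.2) ^ 2
    + (dist p.1 q.1 - dist p.2.1 q.2.1) ^ 2
    + (dist p.1 q.1 - dist p.2.2 q.2.2) ^ 2

/-- The quadratic functional `π ↦ ∬ c_ε dπ dπ` of the ε-multi-marginal GW problem. -/
noncomputable def mgwEps {S X Y : Type*} [PseudoMetricSpace S] [PseudoMetricSpace X]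
    [PseudoMetricSpace Y] [MeasurableSpace S] [MeasurableSpace X] [MeasurableSpace Y]
    (ε : ℝ) (π : Measure (S × X × Y)) : ℝ :=
  ∫ p, ∫ q, cEps ε p q ∂π ∂π

/-- `π ∈ Π(σ, μ, ν)`: three-marginal coupling. -/
def IsTripleCoupling {S X Y : Type*} [MeasurableSpace S] [MeasurableSpace X]
    [MeasurableSpace Y] (π : Measure (S × X × Y))
    (σ : Measure S) (μ : Measure X) (ν : Measure Y) : Prop :=
  π.map Prod.fst = σ ∧ π.map (fun p => p.2.1) = μ ∧ π.map (fun p => p.2.2) = ν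

open MeasureTheory ProbabilityTheory Filter Topology

section QuadraticFunctional

variable {T : Type*} [PseudoMetricSpace T] [CompactSpace T] [MeasurableSpace T] [BorelSpace T]

theorem integral_integral_eq_integral_prod_of_continuous (π : Measure T) [IsFiniteMeasure π]
    {f : T → T → ℝ} (hf : Continuous fun r : T × T => f r.1 r.2) :
    ∫ p, ∫ q, f p q ∂π ∂π = ∫ r, f r.1 r.2 ∂π.prod π :=
  (integral_prod _ (hf.integrable_of_hasCompactSupport (.of_compactSpace _))).symm

theorem integral_integral_add (π : Measure T) [IsFiniteMeasure π] {f g : T → T → ℝ}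
    (hf : Continuous fun r : T × T => f r.1 r.2) (hg : Continuous fun r : T × T => g r.1 r.2) :
    ∫ p, ∫ q, (f p q + g p q) ∂π ∂π = (∫ p, ∫ q, f p q ∂π ∂π) + ∫ p, ∫ q, g p q ∂π ∂π := by
  rw [integral_integral_eq_integral_prod_of_continuous π (hf.add hg),
    integral_integral_eq_integral_prod_of_continuous π hf,
    integral_integral_eq_integral_prod_of_continuous π hg,
    integral_add (hf.integrable_of_hasCompactSupport (.of_compactSpace _))
      (hg.integrable_of_hasCompactSupport (.of_compactSpace _))]

theorem integral_integral_map {U : Type*} [PseudoMetricSpace U] [CompactSpace U]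
    [MeasurableSpace U] [BorelSpace U] (π : Measure T) [IsFiniteMeasure π]
    {φ : T → U} (hφ : Continuous φ) {f : U → U → ℝ}
    (hf : Continuous fun r : U × U => f r.1 r.2) :
    ∫ p, ∫ q, f p q ∂π.map φ ∂π.map φ = ∫ p, ∫ q, f (φ p) (φ q) ∂π ∂π := by
  rw [integral_integral_eq_integral_prod_of_continuous _ hf,
    integral_integral_eq_integral_prod_of_continuous π (by fun_prop),
    Measure.map_prod_map _ _ hφ.measurable hφ.measurable,
    integral_map (by fun_prop) hf.aestronglyMeasurable]
  rfl

/-- `∬ f dπ dπ = ∫ f d(π ⊗ π)`, and `π ↦ π ⊗ π` is weakly continuous. -/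
theorem tendsto_integral_integral_of_tendsto {ι : Type*} {l : Filter ι}
    {πs : ι → ProbabilityMeasure T} {π : ProbabilityMeasure T} (h : Tendsto πs l (𝓝 π))
    {f : T → T → ℝ} (hf : Continuous fun r : T × T => f r.1 r.2) :
    Tendsto (fun i => ∫ p, ∫ q, f p q ∂(πs i : Measure T) ∂(πs i : Measure T)) l
      (𝓝 (∫ p, ∫ q, f p q ∂(π : Measure T) ∂(π : Measure T))) := by
  have hprod : Tendsto (fun i => (πs i).prod (πs i)) l (𝓝 (π.prod π)) :=
    (ProbabilityMeasure.continuous_prod.tendsto (π, π)).comp (h.prodMk_nhds h)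
  simp only [integral_integral_eq_integral_prod_of_continuous _ hf]
  exact ProbabilityMeasure.tendsto_iff_forall_integral_tendsto.mp hprod (.mkOfCompact ⟨_, hf⟩)

end QuadraticFunctional

theorem map_eq_of_tendsto {T W : Type*} [TopologicalSpace T] [MeasurableSpace T]
    [OpensMeasurableSpace T] [TopologicalSpace W] [HasOuterApproxClosed W] [MeasurableSpace W]
    [BorelSpace W] {ι : Type*} {l : Filter ι} [l.NeBot] {πs : ι → ProbabilityMeasure T}
    {π : ProbabilityMeasure T} (h : Tendsto πs l (𝓝 π)) {f : T → W} (hf : Continuous f)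
    {m : Measure W} [IsProbabilityMeasure m] (hm : ∀ i, (πs i : Measure T).map f = m) :
    (π : Measure T).map f = m := by
  have hmap := ProbabilityMeasure.tendsto_map_of_tendsto_of_continuous πs π h hf
  have hconst : ∀ i, (πs i).map hf.measurable.aemeasurable = ⟨m, inferInstance⟩ := fun i =>
    ProbabilityMeasure.toMeasure_injective (hm i)
  simp only [hconst] at hmap
  exact congrArg ProbabilityMeasure.toMeasure (tendsto_nhds_unique hmap tendsto_const_nhds)

section Couplings

variable {S X Y : Type*} [MeasurableSpace S] [MeasurableSpace X] [MeasurableSpace Y]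
  {σ : Measure S} {μ : Measure X} {ν : Measure Y}

theorem IsCoupling.isProbabilityMeasure [IsProbabilityMeasure μ] {γ : Measure (X × Y)}
    (h : IsCoupling γ μ ν) : IsProbabilityMeasure γ :=
  have : IsProbabilityMeasure (γ.map Prod.fst) := h.1 ▸ inferInstance
  Measure.isProbabilityMeasure_of_map Prod.fst

theorem IsTripleCoupling.isProbabilityMeasure [IsProbabilityMeasure σ] {π : Measure (S × X × Y)}
    (h : IsTripleCoupling π σ μ ν) : IsProbabilityMeasure π :=
  have : IsProbabilityMeasure (π.map Prod.fst) := h.1 ▸ inferInstance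
  Measure.isProbabilityMeasure_of_map Prod.fst

theorem IsTripleCoupling.isCoupling_left {π : Measure (S × X × Y)}
    (h : IsTripleCoupling π σ μ ν) : IsCoupling (π.map fun p => (p.1, p.2.1)) σ μ := by
  constructor <;> rw [Measure.map_map (by fun_prop) (by fun_prop)]
  exacts [h.1, h.2.1]

theorem IsTripleCoupling.isCoupling_right {π : Measure (S × X × Y)}
    (h : IsTripleCoupling π σ μ ν) : IsCoupling (π.map fun p => (p.1, p.2.2)) σ ν := by
  constructor <;> rw [Measure.map_map (by fun_prop) (by fun_prop)]
  exacts [h.1, h.2.2]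

theorem IsTripleCoupling.of_isCoupling {π : Measure (S × X × Y)}
    (h₁ : IsCoupling (π.map fun p => (p.1, p.2.1)) σ μ)
    (h₂ : IsCoupling (π.map fun p => (p.1, p.2.2)) σ ν) : IsTripleCoupling π σ μ ν := by
  rw [IsCoupling, Measure.map_map (by fun_prop) (by fun_prop),
    Measure.map_map (by fun_prop) (by fun_prop)] at h₁ h₂
  exact ⟨h₁.1, h₁.2, h₂.2⟩

/-- The glued plan couples the conditional kernels of `γ₁` and `γ₂` over `S` independently. -/
theorem exists_gluing [StandardBorelSpace X] [StandardBorelSpace Y] {γ₁ : Measure (S × X)}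
    {γ₂ : Measure (S × Y)} [IsProbabilityMeasure γ₁] [IsProbabilityMeasure γ₂]
    (h : γ₁.fst = γ₂.fst) :
    ∃ π : Measure (S × X × Y),
      π.map (fun p => (p.1, p.2.1)) = γ₁ ∧ π.map (fun p => (p.1, p.2.2)) = γ₂ := by
  have : Nonempty X := ⟨(ProbabilityMeasure.nonempty ⟨γ₁, inferInstance⟩).some.2⟩
  have : Nonempty Y := ⟨(ProbabilityMeasure.nonempty ⟨γ₂, inferInstance⟩).some.2⟩
  refine ⟨γ₁.fst ⊗ₘ (γ₁.condKernel ×ₖ γ₂.condKernel), ?_, ?_⟩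
  · change Measure.map (Prod.map id Prod.fst) _ = _
    rw [← Measure.compProd_map measurable_fst, ← Kernel.fst_eq, Kernel.fst_prod,
      γ₁.disintegrate]
  · change Measure.map (Prod.map id Prod.snd) _ = _
    rw [← Measure.compProd_map measurable_snd, ← Kernel.snd_eq, Kernel.snd_prod, h,
      γ₂.disintegrate]

end Couplings

section GromovWasserstein

variable {X Y : Type*} [PseudoMetricSpace X] [PseudoMetricSpace Y] [MeasurableSpace X]
  [MeasurableSpace Y] {μ : Measure X} {ν : Measure Y} {γ : Measure (X × Y)}

theorem gwCost_nonneg (γ : Measure (X × Y)) : 0 ≤ gwCost γ :=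
  integral_nonneg fun _ => integral_nonneg fun _ => sq_nonneg _

theorem lgwCost_nonneg {S : Type*} [MeasurableSpace S] (π : Measure (S × X × Y)) :
    0 ≤ lgwCost π :=
  integral_nonneg fun _ => integral_nonneg fun _ => sq_nonneg _

theorem gwSq_le_gwCost (h : IsCoupling γ μ ν) : gwSq μ ν ≤ gwCost γ :=
  csInf_le ⟨0, by rintro _ ⟨γ', -, rfl⟩; exact gwCost_nonneg γ'⟩ ⟨γ, h, rfl⟩

theorem isOptGW_of_forall_le (h : IsCoupling γ μ ν)
    (hle : ∀ γ', IsCoupling γ' μ ν → gwCost γ ≤ gwCost γ') : IsOptGW γ μ ν :=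
  ⟨h, le_antisymm (le_csInf ⟨_, γ, h, rfl⟩ (by rintro _ ⟨γ', h', rfl⟩; exact hle γ' h'))
    (gwSq_le_gwCost h)⟩

theorem gwCost_map [CompactSpace X] [CompactSpace Y] [BorelSpace X] [BorelSpace Y] {T : Type*}
    [PseudoMetricSpace T] [CompactSpace T] [MeasurableSpace T] [BorelSpace T] (π : Measure T)
    [IsFiniteMeasure π] {φ : T → X × Y} (hφ : Continuous φ) :
    gwCost (π.map φ) = ∫ p, ∫ q, (dist (φ p).1 (φ q).1 - dist (φ p).2 (φ q).2) ^ 2 ∂π ∂π :=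
  integral_integral_map π hφ (f := fun a b => (dist a.1 b.1 - dist a.2 b.2) ^ 2) (by fun_prop)

end GromovWasserstein

section MultiMarginal

variable {S X Y : Type*} [PseudoMetricSpace S] [MeasurableSpace S] [PseudoMetricSpace X]
  [MeasurableSpace X] [PseudoMetricSpace Y] [MeasurableSpace Y]
  {σ : Measure S} {μ : Measure X} {ν : Measure Y} {ε : ℝ} {π : Measure (S × X × Y)}

noncomputable def marginalGWCost (π : Measure (S × X × Y)) : ℝ :=
  gwCost (π.map fun p => (p.1, p.2.1)) + gwCost (π.map fun p => (p.1, p.2.2))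

def IsMGWMinimizer (ε : ℝ) (π : Measure (S × X × Y)) (σ : Measure S) (μ : Measure X)
    (ν : Measure Y) : Prop :=
  IsTripleCoupling π σ μ ν ∧ ∀ π', IsTripleCoupling π' σ μ ν → mgwEps ε π ≤ mgwEps ε π'

theorem isOptGW_of_marginalGWCost_le [IsProbabilityMeasure σ] [StandardBorelSpace X]
    [StandardBorelSpace Y] (hπ : IsTripleCoupling π σ μ ν)
    (hle : ∀ π', IsTripleCoupling π' σ μ ν → marginalGWCost π ≤ marginalGWCost π') :
    IsOptGW (π.map fun p => (p.1, p.2.1)) σ μ ∧ IsOptGW (π.map fun p => (p.1, p.2.2)) σ ν := by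
  have hglue : ∀ γ₁ γ₂, IsCoupling γ₁ σ μ → IsCoupling γ₂ σ ν →
      marginalGWCost π ≤ gwCost γ₁ + gwCost γ₂ := by
    intro γ₁ γ₂ h₁ h₂
    have := h₁.isProbabilityMeasure
    have := h₂.isProbabilityMeasure
    obtain ⟨π', rfl, rfl⟩ := exists_gluing (h₁.1.trans h₂.1.symm)
    exact hle π' (.of_isCoupling h₁ h₂)
  constructor
  · refine isOptGW_of_forall_le hπ.isCoupling_left fun γ h => ?_
    have := hglue γ _ h hπ.isCoupling_right
    rw [marginalGWCost] at this
    linarith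
  · refine isOptGW_of_forall_le hπ.isCoupling_right fun γ h => ?_
    have := hglue _ γ hπ.isCoupling_left h
    rw [marginalGWCost] at this
    linarith

theorem IsTripleCoupling.of_tendsto [BorelSpace S] [BorelSpace X] [BorelSpace Y]
    [SecondCountableTopology X] [SecondCountableTopology Y] [IsProbabilityMeasure σ]
    [IsProbabilityMeasure μ] [IsProbabilityMeasure ν] {ι : Type*} {l : Filter ι} [l.NeBot]
    {πs : ι → ProbabilityMeasure (S × X × Y)} {π : ProbabilityMeasure (S × X × Y)}
    (h : Tendsto πs l (𝓝 π)) (hc : ∀ i, IsTripleCoupling (πs i : Measure (S × X × Y)) σ μ ν) :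
    IsTripleCoupling (π : Measure (S × X × Y)) σ μ ν :=
  ⟨map_eq_of_tendsto h (by fun_prop) fun i => (hc i).1,
    map_eq_of_tendsto h (by fun_prop) fun i => (hc i).2.1,
    map_eq_of_tendsto h (by fun_prop) fun i => (hc i).2.2⟩

variable [CompactSpace S] [BorelSpace S] [CompactSpace X] [BorelSpace X] [CompactSpace Y]
  [BorelSpace Y]

theorem mgwEps_eq (ε : ℝ) (π : Measure (S × X × Y)) [IsFiniteMeasure π] :
    mgwEps ε π = ε * lgwCost π + marginalGWCost π := by
  rw [marginalGWCost, gwCost_map π (by fun_prop), gwCost_map π (by fun_prop), mgwEps, lgwCost]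
  simp only [cEps]
  rw [integral_integral_add π (by fun_prop) (by fun_prop),
    integral_integral_add π (by fun_prop) (by fun_prop)]
  simp only [integral_const_mul]
  ring

theorem tendsto_marginalGWCost {ι : Type*} {l : Filter ι}
    {πs : ι → ProbabilityMeasure (S × X × Y)} {π : ProbabilityMeasure (S × X × Y)}
    (h : Tendsto πs l (𝓝 π)) :
    Tendsto (fun i => marginalGWCost (πs i : Measure (S × X × Y))) l
      (𝓝 (marginalGWCost (π : Measure (S × X × Y)))) := by
  simp only [marginalGWCost, gwCost_map _ (show Continuous fun p : S × X × Y => (p.1, p.2.1) by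
    fun_prop), gwCost_map _ (show Continuous fun p : S × X × Y => (p.1, p.2.2) by fun_prop)]
  exact (tendsto_integral_integral_of_tendsto h (by fun_prop)).add
    (tendsto_integral_integral_of_tendsto h (by fun_prop))

variable [IsProbabilityMeasure σ]

theorem IsMGWMinimizer.marginalGWCost_le (hπ : IsMGWMinimizer ε π σ μ ν) (hε : 0 ≤ ε)
    {π' : Measure (S × X × Y)} (hπ' : IsTripleCoupling π' σ μ ν) :
    marginalGWCost π ≤ ε * lgwCost π' + marginalGWCost π' := by
  have := hπ.1.isProbabilityMeasure
  have := hπ'.isProbabilityMeasure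
  calc marginalGWCost π ≤ ε * lgwCost π + marginalGWCost π :=
        le_add_of_nonneg_left (mul_nonneg hε (lgwCost_nonneg π))
    _ = mgwEps ε π := (mgwEps_eq ε π).symm
    _ ≤ mgwEps ε π' := hπ.2 π' hπ'
    _ = ε * lgwCost π' + marginalGWCost π' := mgwEps_eq ε π'

theorem IsMGWMinimizer.lgwCost_le (hπ : IsMGWMinimizer ε π σ μ ν) (hε : 0 < ε)
    {π' : Measure (S × X × Y)} (h₁ : IsOptGW (π'.map fun p => (p.1, p.2.1)) σ μ)
    (h₂ : IsOptGW (π'.map fun p => (p.1, p.2.2)) σ ν) : lgwCost π ≤ lgwCost π' := by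
  have hπ' := IsTripleCoupling.of_isCoupling h₁.1 h₂.1
  have := hπ.1.isProbabilityMeasure
  have := hπ'.isProbabilityMeasure
  have hmarg : marginalGWCost π' ≤ marginalGWCost π :=
    add_le_add (h₁.2.trans_le (gwSq_le_gwCost hπ.1.isCoupling_left))
      (h₂.2.trans_le (gwSq_le_gwCost hπ.1.isCoupling_right))
  have hmin := hπ.2 π' hπ'
  rw [mgwEps_eq, mgwEps_eq] at hmin
  exact le_of_mul_le_mul_left (by linarith) hε

variable {ι : Type*} {l : Filter ι} [l.NeBot] {e : ι → ℝ}
  {πs : ι → ProbabilityMeasure (S × X × Y)} {πbar : ProbabilityMeasure (S × X × Y)}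

theorem marginalGWCost_le_of_tendsto
    (hmin : ∀ i, IsMGWMinimizer (e i) (πs i : Measure (S × X × Y)) σ μ ν) (hpos : ∀ i, 0 ≤ e i)
    (he : Tendsto e l (𝓝 0)) (h : Tendsto πs l (𝓝 πbar)) {π' : Measure (S × X × Y)}
    (hπ' : IsTripleCoupling π' σ μ ν) :
    marginalGWCost (πbar : Measure (S × X × Y)) ≤ marginalGWCost π' := by
  have hbound : Tendsto (fun i => e i * lgwCost π' + marginalGWCost π') l
      (𝓝 (marginalGWCost π')) := by
    simpa using (he.mul_const (lgwCost π')).add_const (marginalGWCost π')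
  exact le_of_tendsto_of_tendsto' (tendsto_marginalGWCost h) hbound fun i =>
    (hmin i).marginalGWCost_le (hpos i) hπ'

theorem lgwCost_le_of_tendsto
    (hmin : ∀ i, IsMGWMinimizer (e i) (πs i : Measure (S × X × Y)) σ μ ν) (hpos : ∀ i, 0 < e i)
    (h : Tendsto πs l (𝓝 πbar)) {π' : Measure (S × X × Y)}
    (h₁ : IsOptGW (π'.map fun p => (p.1, p.2.1)) σ μ)
    (h₂ : IsOptGW (π'.map fun p => (p.1, p.2.2)) σ ν) :
    lgwCost (πbar : Measure (S × X × Y)) ≤ lgwCost π' :=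
  le_of_tendsto' (tendsto_integral_integral_of_tendsto h (by fun_prop)) fun i =>
    (hmin i).lgwCost_le (hpos i) h₁ h₂

end MultiMarginal

/-- every weak accumulation point of minimizers of the ε-multi-marginal GW
problems, as ε → 0, has optimal `(S,X)`- and `(S,Y)`-marginals and minimizes the LGW
functional. -/
theorem mgw_limit_is_lgw
    {S X Y : Type*}
    [MetricSpace S] [CompactSpace S] [MeasurableSpace S] [BorelSpace S]
    [MetricSpace X] [CompactSpace X] [MeasurableSpace X] [BorelSpace X]
    [MetricSpace Y] [CompactSpace Y] [MeasurableSpace Y] [BorelSpace Y]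
    (σ : Measure S) (μ : Measure X) (ν : Measure Y)
    [IsProbabilityMeasure σ] [IsProbabilityMeasure μ] [IsProbabilityMeasure ν]
    (πf : ℝ → ProbabilityMeasure (S × X × Y))
    (hmin : ∀ ε : ℝ, 0 < ε →
      IsTripleCoupling (πf ε : Measure (S × X × Y)) σ μ ν ∧
      ∀ π' : Measure (S × X × Y), IsTripleCoupling π' σ μ ν →
        mgwEps ε (πf ε : Measure (S × X × Y)) ≤ mgwEps ε π')
    (πbar : ProbabilityMeasure (S × X × Y)) (e : ℕ → ℝ)
    (hpos : ∀ n, 0 < e n) (he0 : Tendsto e atTop (𝓝 0))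
    (hconv : Tendsto (fun n => πf (e n)) atTop (𝓝 πbar)) :
    IsOptGW ((πbar : Measure (S × X × Y)).map (fun p => (p.1, p.2.1))) σ μ ∧
    IsOptGW ((πbar : Measure (S × X × Y)).map (fun p => (p.1, p.2.2))) σ ν ∧
    lgwCost (πbar : Measure (S × X × Y)) = lgw σ μ ν := by
  have hmin' : ∀ n, IsMGWMinimizer (e n) (πf (e n) : Measure (S × X × Y)) σ μ ν :=
    fun n => hmin (e n) (hpos n)
  have hπbar := IsTripleCoupling.of_tendsto hconv fun n => (hmin' n).1
  obtain ⟨hopt₁, hopt₂⟩ := isOptGW_of_marginalGWCost_le hπbar fun π' hπ' =>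
    marginalGWCost_le_of_tendsto hmin' (fun n => (hpos n).le) he0 hconv hπ'
  refine ⟨hopt₁, hopt₂, (IsLeast.csInf_eq ⟨⟨_, hopt₁, hopt₂, rfl⟩, ?_⟩ : lgw σ μ ν = _).symm⟩
  rintro _ ⟨π', h₁, h₂, rfl⟩
  exact lgwCost_le_of_tendsto hmin' hpos hconv h₁ h₂
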